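/- arXiv:2510.07195 — 2 statements merged into one kernel-verified Lean document; each statement's English description precedes it below -/
import Mathlib

section
/- Matrix-Vector Product of a Block-Encoding with a Vector-Encoding (Lemma 2.3): Let U_A be an (α,a,ε₀)-block-encoding of an n-qubit matrix A ∈ ℂ^{2^n×2^n} (U_A acts on ℂ^{2^a} ⊗ ℂ^{2^n}), and let U_ψ be a (β,b,ε₁)-VE for the ℓ2-normalized vector |ψ⟩ ∈ ℂ^{2^n} (U_ψ acts on ℂ^{2^b} ⊗ ℂ^{2^n}). On the Hilbert space ℂ^{2^a} ⊗ ℂ^{2^b} ⊗ ℂ^{2^n}, let Ũ_A denote U_A acting on the first and third tensor factors (identity on the second) and Ũ_ψ denote U_ψ acting on the second and third tensor factors (identity on the first). Let 𝒩 := ‖A|ψ⟩‖₂ and assume 𝒩 > 0. Then U := Ũ_A Ũ_ψ is an (αβ/𝒩, a+b, (ε₀ + αε₁)/𝒩)-VE for A|ψ⟩/𝒩; equivalently, ‖A|ψ⟩ − αβ(⟨0|_{a+b} ⊗ I_n)U|0⟩_{a+b+n}‖₂ ≤ ε₀ + αε₁. -/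
open scoped Kronecker Matrix

noncomputable section

/-- Reinterpret a plain function as an element of `EuclideanSpace`. -/
def toEuc {𝕜 : Type*} [RCLike 𝕜] {ι : Type*} (v : ι → 𝕜) : EuclideanSpace 𝕜 ι := WithLp.toLp 2 v

/-- The spectral (ℓ²→ℓ²) operator norm of a matrix. -/
def specNorm {𝕜 : Type*} [RCLike 𝕜] {m n : Type*} [Fintype m] [Fintype n] [DecidableEq n]
    (A : Matrix m n 𝕜) : ℝ :=
  ‖LinearMap.toContinuousLinearMap (Matrix.toEuclideanLin A)‖

/-- The vector encoded in the first block of the first column of `U`: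
`(⟨0| ⊗ I) U |0⟩`. -/
def encVec {I N : Type*} [Zero I] [Zero N] (U : Matrix (I × N) (I × N) ℂ) :
    EuclideanSpace ℂ N := toEuc fun i => U (0, i) (0, 0)

/-- `U` is an `(α, ·, ε)`-vector-encoding of `ψ`. -/
def IsVE {I N : Type*} [Fintype I] [DecidableEq I] [Zero I] [Fintype N] [DecidableEq N] [Zero N]
    (U : Matrix (I × N) (I × N) ℂ) (α ε : ℝ) (ψ : EuclideanSpace ℂ N) : Prop :=
  U ∈ Matrix.unitaryGroup (I × N) ℂ ∧ ‖ψ - (α : ℂ) • encVec U‖ ≤ ε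

/-- The top-left block `(⟨0| ⊗ I) U (|0⟩ ⊗ I)` of a matrix. -/
def topLeft {I N : Type*} [Zero I] (U : Matrix (I × N) (I × N) ℂ) : Matrix N N ℂ :=
  Matrix.of fun i j => U (0, i) (0, j)

/-- `U` is an `(α, ·, ε)`-block-encoding of `A`. -/
def IsBE {I N : Type*} [Fintype I] [DecidableEq I] [Zero I] [Fintype N] [DecidableEq N]
    (U : Matrix (I × N) (I × N) ℂ) (α ε : ℝ) (A : Matrix N N ℂ) : Prop :=
  U ∈ Matrix.unitaryGroup (I × N) ℂ ∧ specNorm (A - (α : ℂ) • topLeft U) ≤ ε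

/-! Applying `U_ψ` and then `U_A` and projecting onto `|0⟩_a|0⟩_b` keeps only the path through the
zero ancilla states, so the encoded vector is `B v`, where `B` is the top-left block of `U_A` and
`v` the vector encoded by `U_ψ`. Then `Aψ - αβ Bv = (A - αB)ψ + αB(ψ - βv)`, and `‖B‖ ≤ 1`
because a block of a unitary is a compression of a contraction. Dividing by `𝒩` rescales the
encoding. -/

open scoped Matrix.Norms.L2Operator

namespace Matrix

variable {𝕜 : Type*} [RCLike 𝕜] {l m n : Type*} [Fintype l] [Fintype m] [Fintype n]

lemma specNorm_eq_l2_opNorm [DecidableEq n] (A : Matrix m n 𝕜) : specNorm A = ‖A‖ := rfl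

lemma norm_toEuc_mulVec_le [DecidableEq n] (A : Matrix m n 𝕜) (x : EuclideanSpace 𝕜 n) :
    ‖toEuc (A *ᵥ x)‖ ≤ ‖A‖ * ‖x‖ :=
  l2_opNorm_mulVec A x

lemma l2_opNorm_le_one_of_conjTranspose_mul_self_eq_one [DecidableEq n] {A : Matrix m n 𝕜}
    (h : Aᴴ * A = 1) : ‖A‖ ≤ 1 := by
  have hone : ‖(1 : Matrix n n 𝕜)‖ ≤ 1 := by
    rw [cstar_norm_def, map_one]
    exact ContinuousLinearMap.norm_id_le
  have hsq : ‖A‖ * ‖A‖ ≤ 1 := by rw [← l2_opNorm_conjTranspose_mul_self, h]; exact hone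
  nlinarith [norm_nonneg A]

lemma l2_opNorm_one_submatrix_id_le [DecidableEq l] [DecidableEq n] {g : l → n}
    (hg : Function.Injective g) : ‖(1 : Matrix n n 𝕜).submatrix id g‖ ≤ 1 := by
  refine l2_opNorm_le_one_of_conjTranspose_mul_self_eq_one ?_
  rw [conjTranspose_submatrix, conjTranspose_one, ← submatrix_mul _ _ _ _ _ Function.bijective_id,
    Matrix.mul_one, submatrix_one g hg]

lemma l2_opNorm_submatrix_le {o : Type*} [Fintype o] [DecidableEq l] [DecidableEq m]
    [DecidableEq n] [DecidableEq o] (A : Matrix m n 𝕜) {f : l → m} {g : o → n}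
    (hf : Function.Injective f) (hg : Function.Injective g) : ‖A.submatrix f g‖ ≤ ‖A‖ := by
  have hA : A.submatrix f g =
      ((1 : Matrix m m 𝕜).submatrix id f)ᴴ * A * (1 : Matrix n n 𝕜).submatrix id g := by
    ext i j
    simp [mul_apply, one_apply]
  calc ‖A.submatrix f g‖ ≤ ‖((1 : Matrix m m 𝕜).submatrix id f)ᴴ‖ * ‖A‖ *
        ‖(1 : Matrix n n 𝕜).submatrix id g‖ := by
        rw [hA]
        exact (l2_opNorm_mul _ _).trans
          (mul_le_mul_of_nonneg_right (l2_opNorm_mul _ _) (norm_nonneg _))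
    _ ≤ 1 * ‖A‖ * 1 := by
        rw [l2_opNorm_conjTranspose]
        gcongr
        exacts [l2_opNorm_one_submatrix_id_le hf, l2_opNorm_one_submatrix_id_le hg]
    _ = ‖A‖ := by ring

lemma reindex_mem_unitaryGroup {α : Type*} [CommRing α] [StarRing α] [DecidableEq m]
    [DecidableEq n] (e : m ≃ n) {U : Matrix m m α} (hU : U ∈ unitaryGroup m α) :
    reindex e e U ∈ unitaryGroup n α := by
  rw [mem_unitaryGroup_iff] at hU ⊢
  rw [star_eq_conjTranspose, conjTranspose_reindex, reindex_apply, reindex_apply,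
    submatrix_mul_equiv, ← star_eq_conjTranspose, hU, submatrix_one_equiv]

variable {I J N : Type*}

def onOuterFactors [DecidableEq J] (U : Matrix (I × N) (I × N) ℂ) :
    Matrix (I × (J × N)) (I × (J × N)) ℂ :=
  of fun p q => (if p.2.1 = q.2.1 then (1 : ℂ) else 0) * U (p.1, p.2.2) (q.1, q.2.2)

lemma onOuterFactors_eq_reindex_kronecker [DecidableEq J] (U : Matrix (I × N) (I × N) ℂ) :
    onOuterFactors (J := J) U =
      reindex ((Equiv.prodAssoc I N J).trans ((Equiv.refl I).prodCongr (Equiv.prodComm N J)))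
        ((Equiv.prodAssoc I N J).trans ((Equiv.refl I).prodCongr (Equiv.prodComm N J)))
        (U ⊗ₖ (1 : Matrix J J ℂ)) := by
  ext ⟨p₁, p₂, p₃⟩ ⟨q₁, q₂, q₃⟩
  simp [onOuterFactors, one_apply, mul_comm]

variable [Fintype I] [DecidableEq I] [Fintype J] [DecidableEq J] [Fintype N]

lemma onOuterFactors_mem_unitaryGroup [DecidableEq N] {U : Matrix (I × N) (I × N) ℂ}
    (hU : U ∈ unitaryGroup (I × N) ℂ) :
    onOuterFactors (J := J) U ∈ unitaryGroup (I × (J × N)) ℂ := by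
  rw [onOuterFactors_eq_reindex_kronecker]
  exact reindex_mem_unitaryGroup _ (kronecker_mem_unitary hU (one_mem _))

lemma l2_opNorm_topLeft_le_one [DecidableEq N] [Zero I] {U : Matrix (I × N) (I × N) ℂ}
    (hU : U ∈ unitaryGroup (I × N) ℂ) : ‖topLeft U‖ ≤ 1 :=
  (l2_opNorm_submatrix_le U (Prod.mk_right_injective 0) (Prod.mk_right_injective 0)).trans
    (l2_opNorm_le_one_of_conjTranspose_mul_self_eq_one (mem_unitaryGroup_iff'.mp hU))

lemma encVec_reindex_onOuterFactors_mul [Zero I] [Zero J] [Zero N]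
    (UA : Matrix (I × N) (I × N) ℂ) (Uψ : Matrix (J × N) (J × N) ℂ) :
    encVec (reindex (Equiv.prodAssoc I J N).symm (Equiv.prodAssoc I J N).symm
      (onOuterFactors UA * ((1 : Matrix I I ℂ) ⊗ₖ Uψ))) = toEuc (topLeft UA *ᵥ encVec Uψ) := by
  ext i
  simp [encVec, topLeft, toEuc, onOuterFactors, mul_apply, mulVec, dotProduct,
    Fintype.sum_prod_type, one_apply]

end Matrix

lemma norm_toEuc_mulVec_sub_le {N : Type*} [Fintype N] [DecidableEq N] {A B : Matrix N N ℂ}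
    {ψ v : EuclideanSpace ℂ N} {α β ε₀ ε₁ : ℝ} (hα : 0 ≤ α) (hB : ‖B‖ ≤ 1) (hψ : ‖ψ‖ ≤ 1)
    (hA : ‖A - (α : ℂ) • B‖ ≤ ε₀) (hv : ‖ψ - (β : ℂ) • v‖ ≤ ε₁) :
    ‖toEuc (A *ᵥ ψ) - ((α * β : ℝ) : ℂ) • toEuc (B *ᵥ v)‖ ≤ ε₀ + α * ε₁ := by
  have hsplit : toEuc (A *ᵥ ψ) - ((α * β : ℝ) : ℂ) • toEuc (B *ᵥ v) =
      toEuc ((A - (α : ℂ) • B) *ᵥ ψ) + (α : ℂ) • toEuc (B *ᵥ (ψ - (β : ℂ) • v)) := by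
    ext i
    simp [toEuc, Matrix.sub_mulVec, Matrix.mulVec_sub, Matrix.mulVec_smul, Matrix.smul_mulVec]
    ring
  calc _ = ‖toEuc ((A - (α : ℂ) • B) *ᵥ ψ) + (α : ℂ) • toEuc (B *ᵥ (ψ - (β : ℂ) • v))‖ := by
        rw [hsplit]
    _ ≤ ‖A - (α : ℂ) • B‖ * ‖ψ‖ + α * (‖B‖ * ‖ψ - (β : ℂ) • v‖) := by
        refine norm_add_le_of_le (Matrix.norm_toEuc_mulVec_le _ _) ?_
        rw [norm_smul, Complex.norm_of_nonneg hα]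
        exact mul_le_mul_of_nonneg_left (Matrix.norm_toEuc_mulVec_le _ _) hα
    _ ≤ ε₀ * 1 + α * (1 * ε₁) := by
        have := (norm_nonneg _).trans hA
        gcongr
    _ = ε₀ + α * ε₁ := by ring

section Encodings

variable {I J N : Type*} [Fintype I] [DecidableEq I] [Zero I] [Fintype J] [DecidableEq J]
  [Zero J] [Fintype N] [DecidableEq N] [Zero N]

lemma IsVE.inv_smul {U : Matrix (I × N) (I × N) ℂ} {α ε : ℝ} {ψ : EuclideanSpace ℂ N}
    (h : IsVE U α ε ψ) {c : ℝ} (hc : 0 ≤ c) : IsVE U (α / c) (ε / c) (c⁻¹ • ψ) := by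
  refine ⟨h.1, ?_⟩
  calc ‖c⁻¹ • ψ - ((α / c : ℝ) : ℂ) • encVec U‖ = c⁻¹ * ‖ψ - (α : ℂ) • encVec U‖ := by
        rw [← norm_smul_of_nonneg (inv_nonneg.2 hc), smul_sub, div_eq_inv_mul,
          Complex.ofReal_mul, mul_smul, Complex.coe_smul]
    _ ≤ c⁻¹ * ε := mul_le_mul_of_nonneg_left h.2 (inv_nonneg.2 hc)
    _ = ε / c := inv_mul_eq_div c ε

theorem IsBE.isVE_reindex_onOuterFactors_mul {UA : Matrix (I × N) (I × N) ℂ} {A : Matrix N N ℂ}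
    {Uψ : Matrix (J × N) (J × N) ℂ} {ψ : EuclideanSpace ℂ N} {α β ε₀ ε₁ : ℝ}
    (hUA : IsBE UA α ε₀ A) (hUψ : IsVE Uψ β ε₁ ψ) (hα : 0 ≤ α) (hψ : ‖ψ‖ ≤ 1) :
    IsVE (Matrix.reindex (Equiv.prodAssoc I J N).symm (Equiv.prodAssoc I J N).symm
        (Matrix.onOuterFactors UA * ((1 : Matrix I I ℂ) ⊗ₖ Uψ)))
      (α * β) (ε₀ + α * ε₁) (toEuc (A *ᵥ ψ)) := by
  refine ⟨Matrix.reindex_mem_unitaryGroup _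
    (mul_mem (Matrix.onOuterFactors_mem_unitaryGroup hUA.1)
      (Matrix.kronecker_mem_unitary (one_mem _) hUψ.1)), ?_⟩
  rw [Matrix.encVec_reindex_onOuterFactors_mul]
  exact norm_toEuc_mulVec_sub_le hα (Matrix.l2_opNorm_topLeft_le_one hUA.1) hψ
    ((Matrix.specNorm_eq_l2_opNorm _).symm.trans_le hUA.2) hUψ.2

end Encodings

theorem matrix_vector_product_of_BE_and_VE_general
    (a b n : ℕ) (α β ε₀ ε₁ : ℝ)
    (hα : 0 ≤ α)
    (UA : Matrix (Fin (2^a) × Fin (2^n)) (Fin (2^a) × Fin (2^n)) ℂ)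
    (A : Matrix (Fin (2^n)) (Fin (2^n)) ℂ)
    (hUA : IsBE UA α ε₀ A)
    (Uψ : Matrix (Fin (2^b) × Fin (2^n)) (Fin (2^b) × Fin (2^n)) ℂ)
    (ψ : EuclideanSpace ℂ (Fin (2^n))) (hψn : ‖ψ‖ = 1)
    (hUψ : IsVE Uψ β ε₁ ψ)
    (UAt : Matrix (Fin (2^a) × (Fin (2^b) × Fin (2^n)))
        (Fin (2^a) × (Fin (2^b) × Fin (2^n))) ℂ)
    (hUAt : UAt = Matrix.of fun p q =>
        (if p.2.1 = q.2.1 then (1 : ℂ) else 0) * UA (p.1, p.2.2) (q.1, q.2.2))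
    (Uψt : Matrix (Fin (2^a) × (Fin (2^b) × Fin (2^n)))
        (Fin (2^a) × (Fin (2^b) × Fin (2^n))) ℂ)
    (hUψt : Uψt = (1 : Matrix (Fin (2^a)) (Fin (2^a)) ℂ) ⊗ₖ Uψ)
    (𝒩 : ℝ) (h𝒩 : 𝒩 = ‖toEuc (A.mulVec ψ)‖) :
    IsVE (Matrix.reindex (Equiv.prodAssoc (Fin (2^a)) (Fin (2^b)) (Fin (2^n))).symm
        (Equiv.prodAssoc (Fin (2^a)) (Fin (2^b)) (Fin (2^n))).symm (UAt * Uψt))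
      (α * β / 𝒩) ((ε₀ + α * ε₁) / 𝒩) (𝒩⁻¹ • toEuc (A.mulVec ψ)) := by
  subst hUAt hUψt h𝒩
  exact (hUA.isVE_reindex_onOuterFactors_mul hUψ hα hψn.le).inv_smul (norm_nonneg _)

/-- **Matrix-vector product of a block-encoding with a vector-encoding** (Lemma 2.3).
`UAt` is `U_A` acting on the first and third tensor factors of
`ℂ^{2^a} ⊗ ℂ^{2^b} ⊗ ℂ^{2^n}` and `Uψt = I_a ⊗ U_ψ` acts on the second and third.
Then `U = UAt * Uψt` (with the ancilla registers grouped first, i.e. reindexed along the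
product associator) is an `(αβ/𝒩, a + b, (ε₀ + αε₁)/𝒩)`-VE for `A ψ / 𝒩`. -/
theorem matrix_vector_product_of_BE_and_VE
    (a b n : ℕ) (α β ε₀ ε₁ : ℝ)
    (hα : 0 ≤ α) (hβ : 1 ≤ β) (hε₀ : 0 ≤ ε₀) (hε₁ : 0 ≤ ε₁)
    (UA : Matrix (Fin (2^a) × Fin (2^n)) (Fin (2^a) × Fin (2^n)) ℂ)
    (A : Matrix (Fin (2^n)) (Fin (2^n)) ℂ)
    (hUA : IsBE UA α ε₀ A)
    (Uψ : Matrix (Fin (2^b) × Fin (2^n)) (Fin (2^b) × Fin (2^n)) ℂ)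
    (ψ : EuclideanSpace ℂ (Fin (2^n))) (hψn : ‖ψ‖ = 1)
    (hUψ : IsVE Uψ β ε₁ ψ)
    (UAt : Matrix (Fin (2^a) × (Fin (2^b) × Fin (2^n)))
        (Fin (2^a) × (Fin (2^b) × Fin (2^n))) ℂ)
    (hUAt : UAt = Matrix.of fun p q =>
        (if p.2.1 = q.2.1 then (1 : ℂ) else 0) * UA (p.1, p.2.2) (q.1, q.2.2))
    (Uψt : Matrix (Fin (2^a) × (Fin (2^b) × Fin (2^n)))
        (Fin (2^a) × (Fin (2^b) × Fin (2^n))) ℂ)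
    (hUψt : Uψt = (1 : Matrix (Fin (2^a)) (Fin (2^a)) ℂ) ⊗ₖ Uψ)
    (𝒩 : ℝ) (h𝒩 : 𝒩 = ‖toEuc (A.mulVec ψ)‖) (h𝒩pos : 0 < 𝒩) :
    IsVE (Matrix.reindex (Equiv.prodAssoc (Fin (2^a)) (Fin (2^b)) (Fin (2^n))).symm
        (Equiv.prodAssoc (Fin (2^a)) (Fin (2^b)) (Fin (2^n))).symm (UAt * Uψt))
      (α * β / 𝒩) ((ε₀ + α * ε₁) / 𝒩) (𝒩⁻¹ • toEuc (A.mulVec ψ)) :=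
  matrix_vector_product_of_BE_and_VE_general a b n α β ε₀ ε₁ hα UA A hUA Uψ ψ hψn hUψ UAt hUAt Uψt
    hUψt 𝒩 h𝒩
end
end

section
/- Vector Sub-Encodings (Lemma B.11): Let m > n be naturals, let U_ψ be an (α,a,ε)-VE for the ℓ2-normalized vector |ψ⟩ ∈ ℂ^{2^m}, and let V_φ be a (β, m−n, δ)-VE for the ℓ2-normalized vector |φ⟩ ∈ ℂ^{2^n} such that ‖|ψ⟩ − V_φ|0⟩_m‖₂ ≤ γ. Then U_ψ is an (αβ, a + m − n, δ + β(ε + γ))-VE for |φ⟩, i.e. ‖|φ⟩ − αβ(⟨0|_{a+m−n} ⊗ I_n)U_ψ|0⟩_{a+m}‖₂ ≤ δ + β(ε + γ). -/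
open scoped Kronecker Matrix

noncomputable section

/-!
Grouping the ancillas of `Uψ` with the top `m - n` qubits makes its encoded vector the
`|0⟩`-slice of `encVec Uψ ≈ ψ / α`, just as `encVec Vφ ≈ φ / β` is the `|0⟩`-slice of
`Vφ|0⟩ ≈ ψ`. Slicing does not increase the norm, so the two encoded vectors are `ε + γ` apart up
to the factor `α`, and scaling by `β` and adding the error `δ` of `Vφ` gives the bound.
-/

section Slice

variable {𝕜 : Type*} [RCLike 𝕜] {J N : Type*}

def sliceVec (f : EuclideanSpace 𝕜 (J × N)) (j : J) : EuclideanSpace 𝕜 N :=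
  toEuc fun i => f (j, i)

lemma norm_sliceVec_le [Fintype J] [Fintype N] (f : EuclideanSpace 𝕜 (J × N)) (j : J) :
    ‖sliceVec f j‖ ≤ ‖f‖ := by
  rw [EuclideanSpace.norm_eq, EuclideanSpace.norm_eq, Fintype.sum_prod_type]
  gcongr
  exact Finset.single_le_sum (f := fun j' => ∑ i, ‖f (j', i)‖ ^ 2)
    (fun _ _ => by positivity) (Finset.mem_univ j)

end Slice

lemma Matrix.reindex_mem_unitaryGroup_s7 {I J : Type*} [Fintype I] [DecidableEq I] [Fintype J]
    [DecidableEq J] {R : Type*} [CommRing R] [StarRing R] (e : I ≃ J) {U : Matrix I I R}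
    (hU : U ∈ Matrix.unitaryGroup I R) : Matrix.reindex e e U ∈ Matrix.unitaryGroup J R := by
  rw [Matrix.mem_unitaryGroup_iff] at hU ⊢
  rw [Matrix.reindex_apply, Matrix.star_eq_conjTranspose, Matrix.conjTranspose_submatrix,
    Matrix.submatrix_mul_equiv, ← Matrix.star_eq_conjTranspose, hU, Matrix.submatrix_one_equiv]

lemma encVec_reindex_prodAssoc_symm {I J N : Type*} [Zero I] [Zero J] [Zero N]
    (U : Matrix (I × J × N) (I × J × N) ℂ) :
    encVec (Matrix.reindex (Equiv.prodAssoc I J N).symm (Equiv.prodAssoc I J N).symm U) =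
      sliceVec (encVec U) 0 := rfl

lemma norm_sub_mul_smul_le {𝕜 E : Type*} [RCLike 𝕜] [NormedAddCommGroup E] [NormedSpace 𝕜 E]
    {φ v y : E} {α β δ η : ℝ} (hβ : 0 ≤ β) (hφ : ‖φ - (β : 𝕜) • v‖ ≤ δ)
    (hv : ‖v - (α : 𝕜) • y‖ ≤ η) :
    ‖φ - ((α * β : ℝ) : 𝕜) • y‖ ≤ δ + β * η := by
  have hsplit : φ - ((α * β : ℝ) : 𝕜) • y = (φ - (β : 𝕜) • v) + (β : 𝕜) • (v - (α : 𝕜) • y) := by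
    rw [smul_sub, smul_smul, RCLike.ofReal_mul, mul_comm]; abel
  calc ‖φ - ((α * β : ℝ) : 𝕜) • y‖
      ≤ ‖φ - (β : 𝕜) • v‖ + ‖(β : 𝕜) • (v - (α : 𝕜) • y)‖ := hsplit ▸ norm_add_le _ _
    _ ≤ δ + β * η := by
      rw [norm_smul, RCLike.norm_ofReal, abs_of_nonneg hβ]
      gcongr

/-- The `2^m`-dimensional space is split as `ℂ^{2^{m-n}} ⊗ ℂ^{2^n}`, and the `a + m - n` ancillas
of the conclusion are those of `Uψ` grouped with the top `m - n` qubits along the product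
associator. -/
theorem vector_sub_encodings_general
    (a n m : ℕ)
    (α β ε δ γ : ℝ)
    (hβ : 1 ≤ β)
    (Uψ : Matrix (Fin (2^a) × (Fin (2^(m-n)) × Fin (2^n)))
        (Fin (2^a) × (Fin (2^(m-n)) × Fin (2^n))) ℂ)
    (ψ : EuclideanSpace ℂ (Fin (2^(m-n)) × Fin (2^n)))
    (hUψ : IsVE Uψ α ε ψ)
    (Vφ : Matrix (Fin (2^(m-n)) × Fin (2^n)) (Fin (2^(m-n)) × Fin (2^n)) ℂ)
    (φ : EuclideanSpace ℂ (Fin (2^n)))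
    (hVφ : IsVE Vφ β δ φ)
    (hclose : ‖ψ - toEuc fun p => Vφ p ((0 : Fin (2^(m-n))), (0 : Fin (2^n)))‖ ≤ γ) :
    IsVE (Matrix.reindex
        (Equiv.prodAssoc (Fin (2^a)) (Fin (2^(m-n))) (Fin (2^n))).symm
        (Equiv.prodAssoc (Fin (2^a)) (Fin (2^(m-n))) (Fin (2^n))).symm Uψ)
      (α * β) (δ + β * (ε + γ)) φ := by
  obtain ⟨hUunitary, hUψ⟩ := hUψ
  refine ⟨Matrix.reindex_mem_unitaryGroup_s7 _ hUunitary, ?_⟩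
  rw [encVec_reindex_prodAssoc_symm]
  refine norm_sub_mul_smul_le (by linarith) hVφ.2 ?_
  set w := toEuc fun p => Vφ p ((0 : Fin (2^(m-n))), (0 : Fin (2^n)))
  calc ‖encVec Vφ - (α : ℂ) • sliceVec (encVec Uψ) 0‖
      = ‖sliceVec (w - (α : ℂ) • encVec Uψ) 0‖ := rfl
    _ ≤ ‖w - (α : ℂ) • encVec Uψ‖ := norm_sliceVec_le _ _
    _ ≤ ‖ψ - (α : ℂ) • encVec Uψ‖ + ‖ψ - w‖ := by
      rw [add_comm, norm_sub_rev ψ w]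
      exact norm_sub_le_norm_sub_add_norm_sub _ _ _
    _ ≤ ε + γ := add_le_add hUψ hclose

/-- **Vector sub-encodings** (Lemma B.11).
The `2^m`-dimensional space is written with its tensor splitting
`ℂ^{2^{m-n}} ⊗ ℂ^{2^n}`.  If `Uψ` is an `(α, a, ε)`-VE for `ψ`,
`Vφ` is a `(β, m-n, δ)`-VE for `φ`, and `‖ψ - Vφ|0⟩_m‖₂ ≤ γ`, then `Uψ`
(with its `a` ancillas grouped together with the top `m-n` qubits, i.e. reindexed
along the product associator) is an `(αβ, a + m - n, δ + β(ε + γ))`-VE for `φ`. -/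
theorem vector_sub_encodings
    (a n m : ℕ) (hmn : n < m)
    (α β ε δ γ : ℝ)
    (hα : 1 ≤ α) (hβ : 1 ≤ β) (hε : 0 ≤ ε) (hδ : 0 ≤ δ) (hγ : 0 ≤ γ)
    (Uψ : Matrix (Fin (2^a) × (Fin (2^(m-n)) × Fin (2^n)))
        (Fin (2^a) × (Fin (2^(m-n)) × Fin (2^n))) ℂ)
    (ψ : EuclideanSpace ℂ (Fin (2^(m-n)) × Fin (2^n))) (hψn : ‖ψ‖ = 1)
    (hUψ : IsVE Uψ α ε ψ)
    (Vφ : Matrix (Fin (2^(m-n)) × Fin (2^n)) (Fin (2^(m-n)) × Fin (2^n)) ℂ)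
    (φ : EuclideanSpace ℂ (Fin (2^n))) (hφn : ‖φ‖ = 1)
    (hVφ : IsVE Vφ β δ φ)
    (hclose : ‖ψ - toEuc fun p => Vφ p ((0 : Fin (2^(m-n))), (0 : Fin (2^n)))‖ ≤ γ) :
    IsVE (Matrix.reindex
        (Equiv.prodAssoc (Fin (2^a)) (Fin (2^(m-n))) (Fin (2^n))).symm
        (Equiv.prodAssoc (Fin (2^a)) (Fin (2^(m-n))) (Fin (2^n))).symm Uψ)
      (α * β) (δ + β * (ε + γ)) φ :=
  vector_sub_encodings_general a n m α β ε δ γ hβ Uψ ψ hUψ Vφ φ hVφ hclose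
end
end
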